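/- In a stochastic BPA game, the winning region of player Box for reaching a simple target set T with positive probability satisfies W_Box(T,>0) = B*AΓ*, where A = W_Box(T,>0) ∩ Γ and B = W_Box(T∪{ε},>0) ∩ Γ; in particular W_Box(T,>0) is a regular subset of Γ*. -/

import Mathlib

open scoped Classical

/-- A stochastic BPA game: finite stack alphabet `Γ`, rules `X → α` with
`|α| ≤ 2`, symbols partitioned among player Box, player Diamond, and
probabilistic symbols, the latter carrying positive rational distributions
over their rules. -/
structure BPA (Γ : Type*) [Fintype Γ] where
  rule : Γ → List Γ → Prop
  rule_len : ∀ X α, rule X α → α.length ≤ 2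
  rule_total : ∀ X, ∃ α, rule X α
  isBox : Γ → Prop
  isDiamond : Γ → Prop
  isCirc : Γ → Prop
  cover : ∀ X, isBox X ∨ isDiamond X ∨ isCirc X
  disjBD : ∀ X, ¬ (isBox X ∧ isDiamond X)
  disjBC : ∀ X, ¬ (isBox X ∧ isCirc X)
  disjDC : ∀ X, ¬ (isDiamond X ∧ isCirc X)
  prob : Γ → List Γ → ℝ
  prob_nonneg : ∀ X α, 0 ≤ prob X α
  prob_rat : ∀ X α, ∃ q : ℚ, prob X α = (q : ℝ)
  prob_supp : ∀ X α, isCirc X → (0 < prob X α ↔ rule X α)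
  prob_sum : ∀ X, isCirc X → ∑' α, prob X α = 1

variable {Γ : Type*} [Fintype Γ]

/-- A history-dependent randomized strategy for the player owning the symbols
satisfying `own` in the stochastic game induced by a BPA game: to every history
(sequence of configurations) and current configuration `X :: β` with `own X`,
it assigns a probability distribution on the applicable rules. -/
structure BPA.Strat (Δ : BPA Γ) (own : Γ → Prop) where
  f : List (List Γ) → List Γ → List Γ → ℝ
  nonneg : ∀ w c α, 0 ≤ f w c α
  supp : ∀ w X β α, own X → f w (X :: β) α ≠ 0 → Δ.rule X α
  sum_one : ∀ w X β, own X → ∑' α, f w (X :: β) α = 1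

/-- The distribution on rules chosen at configuration `c` after history `w`. -/
noncomputable def BPA.choice (Δ : BPA Γ) (σ : Δ.Strat Δ.isBox)
    (π : Δ.Strat Δ.isDiamond) (w : List (List Γ)) (c : List Γ) (α : List Γ) : ℝ :=
  match c with
  | [] => 0
  | X :: _ => if Δ.isBox X then σ.f w c α else if Δ.isDiamond X then π.f w c α
      else Δ.prob X α

/-- One-step transition probability between configurations in the play
induced by a BPA game (the empty configuration `ε` loops with probability 1,
and `X :: β` moves to `α ++ β` for a rule `X → α`). -/
noncomputable def BPA.stepP (Δ : BPA Γ) (σ : Δ.Strat Δ.isBox)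
    (π : Δ.Strat Δ.isDiamond) (w : List (List Γ)) (c c' : List Γ) : ℝ :=
  match c with
  | [] => if c' = [] then 1 else 0
  | X :: β => ∑' α : List Γ,
      if α ++ β = c' ∧ Δ.rule X α then Δ.choice σ π w (X :: β) α else 0

/-- Probability of reaching `T` from configuration `c` within at most `n`
transitions, after history `w`. -/
noncomputable def BPA.reachN (Δ : BPA Γ) (σ : Δ.Strat Δ.isBox)
    (π : Δ.Strat Δ.isDiamond) (T : Set (List Γ)) :
    ℕ → List (List Γ) → List Γ → ℝ
  | 0, _, c => if c ∈ T then 1 else 0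
  | n+1, w, c => if c ∈ T then 1 else
      ∑' c', Δ.stepP σ π w c c' * BPA.reachN Δ σ π T n (w ++ [c]) c'

/-- Probability `P_c^{σ,π}(Reach(T))` of reaching `T` from configuration `c`. -/
noncomputable def BPA.reachP (Δ : BPA Γ) (σ : Δ.Strat Δ.isBox)
    (π : Δ.Strat Δ.isDiamond) (T : Set (List Γ)) (c : List Γ) : ℝ :=
  ⨆ n, Δ.reachN σ π T n [] c

/-- The winning region `W_Box(T, >0)`. -/
def BPA.WBoxPos (Δ : BPA Γ) (T : Set (List Γ)) : Set (List Γ) :=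
  {c | ∃ σ : Δ.Strat Δ.isBox, ∀ π : Δ.Strat Δ.isDiamond, 0 < Δ.reachP σ π T c}

/-- The winning region `W_Box(T, =1)`. -/
def BPA.WBoxOne (Δ : BPA Γ) (T : Set (List Γ)) : Set (List Γ) :=
  {c | ∃ σ : Δ.Strat Δ.isBox, ∀ π : Δ.Strat Δ.isDiamond, Δ.reachP σ π T c = 1}

/-- The winning region `W_Diamond(T, =0)`. -/
def BPA.WDiaZero (Δ : BPA Γ) (T : Set (List Γ)) : Set (List Γ) :=
  {c | ∃ π : Δ.Strat Δ.isDiamond, ∀ σ : Δ.Strat Δ.isBox, Δ.reachP σ π T c = 0}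

/-- The winning region `W_Diamond(T, <1)`. -/
def BPA.WDiaLtOne (Δ : BPA Γ) (T : Set (List Γ)) : Set (List Γ) :=
  {c | ∃ π : Δ.Strat Δ.isDiamond, ∀ σ : Δ.Strat Δ.isBox, Δ.reachP σ π T c < 1}

/-- The language `{[X] : X ∈ S}` of one-letter words over a set of symbols. -/
def symLang (S : Set Γ) : Language Γ := {c | ∃ X ∈ S, c = [X]}

/-- The simple set of target configurations `S·Γ*` determined by the set of
symbols `S`: membership depends only on the top stack symbol, and `ε ∉ S·Γ*`. -/
def topLang (S : Set Γ) : Language Γ := {c | ∃ X β, c = X :: β ∧ X ∈ S}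

/-!
Positive-probability reachability is qualitative: `0 < P(Reach T)` iff some finite sequence of
moves of positive probability leads into `T`. A play from `Xγ` behaves like a play from `X` until
the stack first shrinks back to `γ`. Splicing strategies at that moment shows that Box wins from
`Xγ` iff she wins from `X` for `T`, or wins from `X` for `T ∪ {ε}` and from `γ` for `T`; Diamond's
counter-strategies are spliced in the same way. Since only the existence of a path matters, no
bound uniform in the history at the splice is needed. Thus `W = A Γ* + B W` with `ε ∉ W`, which
Arden's lemma solves as `W = B* A Γ*`, and the left quotients of `W` are among `W`, `Γ*` and `∅`,
so `W` is regular.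
-/

lemma Summable.tsum_pos_iff {ι : Type*} {f : ι → ℝ} (hf : Summable f) (h0 : ∀ i, 0 ≤ f i) :
    0 < ∑' i, f i ↔ ∃ i, 0 < f i :=
  ⟨fun h => by by_contra! h'; exact h.not_ge (tsum_nonpos h'), fun ⟨i, hi⟩ => hf.tsum_pos h0 i hi⟩

lemma List.rdrop_cons_of_le {α : Type*} {a : α} {l : List α} {n : ℕ} (h : n ≤ l.length) :
    (a :: l).rdrop n = a :: l.rdrop n := by
  simp [List.rdrop, Nat.sub_add_comm h]

lemma List.length_lt_of_mem_map_append {α : Type*} {γ : List α} {w : List (List α)}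
    (hw : ∀ v ∈ w, v ≠ []) :
    ∀ v ∈ w.map (· ++ γ), γ.length < v.length := by
  simp only [List.mem_map, forall_exists_index, and_imp, forall_apply_eq_imp_iff₂,
    List.length_append]
  exact fun v hv => Nat.lt_add_of_pos_left (List.length_pos_iff.2 (hw v hv))

theorem Language.isRegular_of_leftQuotient_mem {α : Type*} {L : Language α}
    {Q : Set (Language α)} (hQ : Q.Finite) (hL : L ∈ Q)
    (hstep : ∀ M ∈ Q, ∀ a, M.leftQuotient [a] ∈ Q) : L.IsRegular := by
  refine .of_finite_range_leftQuotient (hQ.subset ?_)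
  rintro _ ⟨x, rfl⟩
  induction x using List.reverseRecOn with
  | nil => exact hL
  | append_singleton x a ih => exact Language.leftQuotient_append L x [a] ▸ hstep _ ih a

section Languages

omit [Fintype Γ]

variable {S A B : Set Γ} {L : Language Γ} {X : Γ} {γ : List Γ}

lemma nil_notMem_topLang : [] ∉ topLang S := fun ⟨_, _, h, _⟩ => List.cons_ne_nil _ _ h.symm

lemma cons_mem_topLang {β : List Γ} : X :: β ∈ topLang S ↔ X ∈ S :=
  ⟨fun ⟨_, _, h, hY⟩ => (List.cons_eq_cons.1 h).1 ▸ hY, fun h => ⟨X, β, rfl, h⟩⟩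

lemma mem_topLang_append {c : List Γ} (hc : c ≠ []) : c ++ γ ∈ topLang S ↔ c ∈ topLang S := by
  rcases c with _ | ⟨Y, β⟩
  · exact (hc rfl).elim
  · exact cons_mem_topLang.trans cons_mem_topLang.symm

lemma nil_notMem_symLang : [] ∉ symLang S := fun ⟨_, _, h⟩ => List.cons_ne_nil _ _ h.symm

lemma nil_notMem_symLang_mul : [] ∉ symLang S * L := by
  rintro ⟨_, ⟨X, _, rfl⟩, _, _, h⟩
  exact List.cons_ne_nil _ _ h

lemma cons_mem_symLang_mul : X :: γ ∈ symLang S * L ↔ X ∈ S ∧ γ ∈ L := by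
  constructor
  · rintro ⟨_, ⟨Y, hY, rfl⟩, b, hb, h⟩
    obtain ⟨rfl, rfl⟩ := List.cons_eq_cons.1 h
    exact ⟨hY, hb⟩
  · rintro ⟨hX, hγ⟩
    exact ⟨[X], ⟨X, hX, rfl⟩, γ, hγ, rfl⟩

theorem eq_kstar_symLang_mul_of_cons_mem_iff (hnil : [] ∉ L)
    (hcons : ∀ X γ, X :: γ ∈ L ↔ X ∈ A ∨ X ∈ B ∧ γ ∈ L) :
    L = KStar.kstar (symLang B) * symLang A * ⊤ := by
  rw [mul_assoc, ← Language.self_eq_mul_add_iff nil_notMem_symLang]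
  have htop : ∀ γ, γ ∈ (⊤ : Language Γ) := fun _ => trivial
  ext (_ | ⟨X, γ⟩)
  · simp only [Language.mem_add, hnil, nil_notMem_symLang_mul, or_self]
  · simp only [Language.mem_add, cons_mem_symLang_mul, hcons, htop, and_true, or_comm]

theorem isRegular_of_cons_mem_iff (hcons : ∀ X γ, X :: γ ∈ L ↔ X ∈ A ∨ X ∈ B ∧ γ ∈ L) :
    L.IsRegular := by
  refine Language.isRegular_of_leftQuotient_mem (Q := {L, ⊤, ⊥}) (Set.toFinite _) (by simp) ?_
  have hquot : ∀ X, L.leftQuotient [X] = if X ∈ A then ⊤ else if X ∈ B then L else ⊥ := by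
    intro X
    ext γ
    simp only [Language.mem_leftQuotient, List.singleton_append, hcons]
    split_ifs with hA hB
    · exact iff_of_true (.inl hA) trivial
    · simp [hA, hB]
    · exact iff_of_false (by simp [hA, hB]) id
  rintro M (rfl | rfl | rfl) X
  · rw [hquot]
    split_ifs <;> simp
  · exact Or.inr (Or.inl rfl)
  · exact Or.inr (Or.inr rfl)

end Languages

namespace BPA

variable {Δ : BPA Γ}

section Transitions

variable {σ : Δ.Strat Δ.isBox} {π : Δ.Strat Δ.isDiamond} {T : Set (List Γ)}
  {w : List (List Γ)} {X : Γ} {β : List Γ}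

lemma choice_nonneg (w : List (List Γ)) (c α : List Γ) : 0 ≤ Δ.choice σ π w c α := by
  rcases c with _ | ⟨X, β⟩
  · exact le_rfl
  · simp only [choice]
    split_ifs
    exacts [σ.nonneg .., π.nonneg .., Δ.prob_nonneg ..]

lemma tsum_choice (w : List (List Γ)) (X : Γ) (β : List Γ) :
    ∑' α, Δ.choice σ π w (X :: β) α = 1 := by
  simp only [choice]
  split_ifs with hB hD
  · exact σ.sum_one _ _ _ hB
  · exact π.sum_one _ _ _ hD
  · exact Δ.prob_sum X (((Δ.cover X).resolve_left hB).resolve_left hD)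

lemma summable_choice (w : List (List Γ)) (X : Γ) (β : List Γ) :
    Summable (Δ.choice σ π w (X :: β)) := by
  by_contra h
  simpa [tsum_eq_zero_of_not_summable h] using tsum_choice (σ := σ) (π := π) w X β

lemma rule_of_choice_ne_zero {α : List Γ} (h : Δ.choice σ π w (X :: β) α ≠ 0) :
    Δ.rule X α := by
  simp only [choice] at h
  split_ifs at h with hB hD
  · exact σ.supp _ _ _ _ hB h
  · exact π.supp _ _ _ _ hD h
  · exact (Δ.prob_supp X α (((Δ.cover X).resolve_left hB).resolve_left hD)).1
      ((Δ.prob_nonneg X α).lt_of_ne' h)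

lemma stepP_cons_append (α : List Γ) :
    Δ.stepP σ π w (X :: β) (α ++ β) = Δ.choice σ π w (X :: β) α := by
  rw [stepP, tsum_eq_single α]
  · by_cases hr : Δ.rule X α
    · simp [hr]
    · simpa [hr] using (not_imp_comm.1 rule_of_choice_ne_zero hr).symm
  · intro α' hα'
    simp [hα']

lemma stepP_cons_eq_zero {c : List Γ} (hc : ∀ α, α ++ β ≠ c) :
    Δ.stepP σ π w (X :: β) c = 0 := by
  simp [stepP, hc]

lemma tsum_stepP_cons_mul (F : List Γ → ℝ) :
    ∑' c, Δ.stepP σ π w (X :: β) c * F c = ∑' α, Δ.choice σ π w (X :: β) α * F (α ++ β) := by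
  simp_rw [← stepP_cons_append]
  refine ((List.append_left_injective β).tsum_eq fun c hc => ?_).symm
  by_contra hβ
  exact hc (by simp [stepP_cons_eq_zero fun α h => hβ ⟨α, h⟩])

lemma summable_choice_mul {F : List Γ → ℝ} (hF : ∀ α, F α ∈ Set.Icc 0 1) :
    Summable fun α => Δ.choice σ π w (X :: β) α * F α :=
  (summable_choice w X β).of_nonneg_of_le (fun α => mul_nonneg (choice_nonneg ..) (hF α).1)
    fun α => mul_le_of_le_one_right (choice_nonneg ..) (hF α).2

lemma reachN_zero (c : List Γ) : Δ.reachN σ π T 0 w c = if c ∈ T then 1 else 0 := rfl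

lemma reachN_succ_nil (n : ℕ) :
    Δ.reachN σ π T (n + 1) w [] = if [] ∈ T then 1 else Δ.reachN σ π T n (w ++ [[]]) [] := by
  simp [reachN, stepP]

lemma reachN_succ_cons (n : ℕ) :
    Δ.reachN σ π T (n + 1) w (X :: β) = if X :: β ∈ T then 1 else
      ∑' α, Δ.choice σ π w (X :: β) α * Δ.reachN σ π T n (w ++ [X :: β]) (α ++ β) := by
  rw [reachN, tsum_stepP_cons_mul]

lemma reachN_mem_Icc (n : ℕ) (w : List (List Γ)) (c : List Γ) :
    Δ.reachN σ π T n w c ∈ Set.Icc 0 1 := by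
  induction n generalizing w c with
  | zero => rw [reachN_zero]; split_ifs <;> simp
  | succ n ih =>
    rcases c with _ | ⟨X, β⟩
    · rw [reachN_succ_nil]; split_ifs
      exacts [by simp, ih _ _]
    rw [reachN_succ_cons]
    split_ifs
    · simp
    have hs := summable_choice_mul (σ := σ) (π := π) (w := w) (X := X) (β := β)
      fun α => ih (w ++ [X :: β]) (α ++ β)
    refine ⟨tsum_nonneg fun α => mul_nonneg (choice_nonneg ..) (ih _ _).1, ?_⟩
    calc _ ≤ ∑' α, Δ.choice σ π w (X :: β) α :=
          hs.tsum_le_tsum (fun α => mul_le_of_le_one_right (choice_nonneg ..) (ih _ _).2)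
            (summable_choice w X β)
      _ = 1 := tsum_choice w X β

lemma reachN_succ_cons_pos_iff (n : ℕ) :
    0 < Δ.reachN σ π T (n + 1) w (X :: β) ↔ X :: β ∈ T ∨
      ∃ α, 0 < Δ.choice σ π w (X :: β) α ∧ 0 < Δ.reachN σ π T n (w ++ [X :: β]) (α ++ β) := by
  have hI α := reachN_mem_Icc (σ := σ) (π := π) (T := T) n (w ++ [X :: β]) (α ++ β)
  rw [reachN_succ_cons]
  split_ifs with hT
  · simp [hT]
  rw [(summable_choice_mul hI).tsum_pos_iff fun α => mul_nonneg (choice_nonneg ..) (hI α).1]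
  simp [hT, mul_pos_iff, (choice_nonneg (σ := σ) (π := π) w (X :: β) _).not_gt]

end Transitions

/-- Positive-probability reachability; the self-loop of `ε` is left out as it leads nowhere new. -/
inductive PosReach (σ : Δ.Strat Δ.isBox) (π : Δ.Strat Δ.isDiamond) (T : Set (List Γ)) :
    List (List Γ) → List Γ → Prop
  | mem {w c} : c ∈ T → PosReach σ π T w c
  | step {w X β} (α : List Γ) : 0 < Δ.choice σ π w (X :: β) α →
      PosReach σ π T (w ++ [X :: β]) (α ++ β) → PosReach σ π T w (X :: β)

section PosReach

variable {σ : Δ.Strat Δ.isBox} {π : Δ.Strat Δ.isDiamond} {T : Set (List Γ)}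
  {w : List (List Γ)} {c : List Γ}

lemma PosReach.nil_mem (h : PosReach σ π T w []) : [] ∈ T := by
  cases h
  assumption

lemma exists_reachN_pos_iff : (∃ n, 0 < Δ.reachN σ π T n w c) ↔ PosReach σ π T w c := by
  constructor
  · rintro ⟨n, hn⟩
    induction n generalizing w c with
    | zero =>
      rw [reachN_zero] at hn
      split_ifs at hn with hc
      exacts [.mem hc, (lt_irrefl 0 hn).elim]
    | succ n ih =>
      rcases c with _ | ⟨X, β⟩
      · rw [reachN_succ_nil] at hn
        split_ifs at hn with hc
        exacts [.mem hc, .mem (ih hn).nil_mem]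
      · rcases (reachN_succ_cons_pos_iff n).1 hn with hc | ⟨α, hα, hr⟩
        exacts [.mem hc, .step α hα (ih hr)]
  · intro h
    induction h with
    | mem hc => exact ⟨0, by simp [reachN_zero, hc]⟩
    | step α hα _ ih =>
      obtain ⟨n, hn⟩ := ih
      exact ⟨n + 1, (reachN_succ_cons_pos_iff n).2 (.inr ⟨α, hα, hn⟩)⟩

lemma reachP_pos_iff : 0 < Δ.reachP σ π T c ↔ PosReach σ π T [] c := by
  rw [reachP, lt_ciSup_iff ⟨1, Set.forall_mem_range.2 fun n => (reachN_mem_Icc n [] c).2⟩,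
    exists_reachN_pos_iff]

lemma mem_WBoxPos_iff :
    c ∈ Δ.WBoxPos T ↔ ∃ σ : Δ.Strat Δ.isBox, ∀ π : Δ.Strat Δ.isDiamond, PosReach σ π T [] c := by
  simp only [WBoxPos, Set.mem_ofPred_eq, reachP_pos_iff]

end PosReach

namespace Strat

variable {own : Γ → Prop}

instance : Nonempty (Δ.Strat own) := by
  choose r hr using Δ.rule_total
  refine ⟨⟨fun _ c α => match c with | [] => 0 | X :: _ => if α = r X then 1 else 0,
    fun _ c α => ?_, fun _ X _ α _ h => ?_, fun _ X _ _ => ?_⟩⟩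
  · rcases c with _ | ⟨X, _⟩
    · exact le_rfl
    · dsimp only; split_ifs <;> norm_num
  · dsimp only at h
    split_ifs at h with hα
    exacts [hα ▸ hr X, absurd rfl h]
  · exact tsum_ite_eq (r X) 1

def shift (s : Δ.Strat own) (h : List (List Γ)) : Δ.Strat own where
  f w := s.f (h ++ w)
  nonneg _ := s.nonneg _
  supp _ := s.supp _
  sum_one _ := s.sum_one _

def above (s : Δ.Strat own) (γ : List Γ) : Δ.Strat own where
  f w c := s.f (w.map (· ++ γ)) (c ++ γ)
  nonneg _ _ := s.nonneg _ _
  supp _ X β := s.supp _ X (β ++ γ)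
  sum_one _ X β := s.sum_one _ X (β ++ γ)

/-- While the whole play stays strictly above the stack bottom `γ`, play `s₁` on the part
above `γ`; from the first visit of `γ` on, after the history `h` leading to it, play `s₂ h`
with `h` cut off. -/
noncomputable def splice (γ : List Γ) (s₁ : Δ.Strat own) (s₂ : List (List Γ) → Δ.Strat own) :
    Δ.Strat own where
  f w c :=
    if ∀ v ∈ w ++ [c], γ.length < v.length then
      s₁.f (w.map (·.rdrop γ.length)) (c.rdrop γ.length)
    else (s₂ (w.takeWhile (γ.length < ·.length))).f (w.dropWhile (γ.length < ·.length)) c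
  nonneg w c α := by
    split_ifs
    exacts [s₁.nonneg .., (s₂ _).nonneg ..]
  supp w X β α hX hf := by
    split_ifs at hf with h
    · rw [List.rdrop_cons_of_le (Nat.le_of_lt_succ (h (X :: β) (by simp)))] at hf
      exact s₁.supp _ _ _ _ hX hf
    · exact (s₂ _).supp _ _ _ _ hX hf
  sum_one w X β hX := by
    split_ifs with h
    · rw [List.rdrop_cons_of_le (Nat.le_of_lt_succ (h (X :: β) (by simp)))]
      exact s₁.sum_one _ _ _ hX
    · exact (s₂ _).sum_one _ _ _ hX

variable {γ : List Γ} {s₁ : Δ.Strat own} {s₂ : List (List Γ) → Δ.Strat own}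

lemma splice_f_map_append {w : List (List Γ)} {c : List Γ} (hw : ∀ v ∈ w, v ≠ [])
    (hc : c ≠ []) : (splice γ s₁ s₂).f (w.map (· ++ γ)) (c ++ γ) = s₁.f w c := by
  have hlt : ∀ v : List Γ, v ≠ [] → γ.length < (v ++ γ).length := fun v hv => by
    simp [List.length_pos_iff.2 hv]
  dsimp only [splice]
  rw [if_pos]
  · simp [List.rdrop, Function.comp_def]
  · simp only [List.mem_append, List.mem_map, List.mem_singleton]
    rintro _ (⟨v, hv, rfl⟩ | rfl)
    exacts [hlt v (hw v hv), hlt c hc]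

lemma splice_f_append {h u : List (List Γ)} {c : List Γ} (hh : ∀ v ∈ h, γ.length < v.length)
    (hu : (u ++ [c]).head? = some γ) : (splice γ s₁ s₂).f (h ++ u) c = (s₂ h).f u c := by
  have hmem : γ ∈ h ++ u ++ [c] := by
    obtain ⟨t, ht⟩ := List.head?_eq_some_iff.1 hu
    simp [List.append_assoc, ht]
  have hp : ∀ v ∈ h, decide (γ.length < v.length) = true := by simpa using hh
  dsimp only [splice]
  rw [if_neg fun hall => lt_irrefl _ (hall γ hmem), List.takeWhile_append_of_pos hp,
    List.dropWhile_append_of_pos hp]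
  rcases u with _ | ⟨v, t⟩
  · simp
  · obtain rfl : v = γ := by simpa using hu
    simp

end Strat

section Simulation

variable {γ : List Γ} {σ σ₀ : Δ.Strat Δ.isBox} {π π₀ : Δ.Strat Δ.isDiamond}
  {T T₀ : Set (List Γ)}

lemma choice_cons_congr {σ₁ σ₂ : Δ.Strat Δ.isBox} {π₁ π₂ : Δ.Strat Δ.isDiamond}
    {w₁ w₂ : List (List Γ)} {X : Γ} {β₁ β₂ : List Γ}
    (hσ : Δ.isBox X → σ₁.f w₁ (X :: β₁) = σ₂.f w₂ (X :: β₂))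
    (hπ : Δ.isDiamond X → π₁.f w₁ (X :: β₁) = π₂.f w₂ (X :: β₂)) :
    Δ.choice σ₁ π₁ w₁ (X :: β₁) = Δ.choice σ₂ π₂ w₂ (X :: β₂) := by
  funext α
  simp only [choice]
  split_ifs with hB hD
  exacts [congrFun (hσ hB) α, congrFun (hπ hD) α, rfl]

def AgreeAbove (γ : List Γ) (σ σ₀ : Δ.Strat Δ.isBox) (π π₀ : Δ.Strat Δ.isDiamond) : Prop :=
  ∀ w X β, (∀ v ∈ w, v ≠ []) →
    Δ.choice σ π (w.map (· ++ γ)) (X :: β ++ γ) = Δ.choice σ₀ π₀ w (X :: β)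

lemma agreeAbove_splice_box (σs : List (List Γ) → Δ.Strat Δ.isBox) :
    AgreeAbove γ (Strat.splice γ σ₀ σs) σ₀ π (π.above γ) := fun _ X β hw =>
  choice_cons_congr (fun _ => Strat.splice_f_map_append hw (List.cons_ne_nil X β)) fun _ => rfl

lemma agreeAbove_splice_diamond (πs : List (List Γ) → Δ.Strat Δ.isDiamond) :
    AgreeAbove γ σ (σ.above γ) (Strat.splice γ π₀ πs) π₀ := fun _ X β hw =>
  choice_cons_congr (fun _ => rfl) fun _ => Strat.splice_f_map_append hw (List.cons_ne_nil X β)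

theorem PosReach.append_bottom (hag : AgreeAbove γ σ σ₀ π π₀)
    (hT : ∀ c ∈ T₀, c ≠ [] → c ++ γ ∈ T)
    (hpop : [] ∈ T₀ → ∀ w : List (List Γ), (∀ v ∈ w, v ≠ []) →
      PosReach σ π T (w.map (· ++ γ)) γ)
    {w : List (List Γ)} {c : List Γ} (h : PosReach σ₀ π₀ T₀ w c) (hw : ∀ v ∈ w, v ≠ []) :
    PosReach σ π T (w.map (· ++ γ)) (c ++ γ) := by
  induction h with
  | @mem w c hc =>
    rcases eq_or_ne c [] with rfl | hne
    · exact hpop hc w hw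
    · exact .mem (hT c hc hne)
  | @step w X β α hα _ ih =>
    refine .step (β := β ++ γ) α (by rwa [← List.cons_append, hag w X β hw]) ?_
    simpa using ih (List.forall_mem_append.2
      ⟨hw, List.forall_mem_singleton.2 (List.cons_ne_nil X β)⟩)

theorem PosReach.of_append_bottom (hag : AgreeAbove γ σ σ₀ π π₀)
    (hT : ∀ c, c ≠ [] → c ++ γ ∈ T → c ∈ T₀)
    (hpop : [] ∉ T₀ → ∀ w : List (List Γ), (∀ v ∈ w, v ≠ []) →
      ¬ PosReach σ π T (w.map (· ++ γ)) γ)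
    {w : List (List Γ)} {c : List Γ} (h : PosReach σ π T (w.map (· ++ γ)) (c ++ γ))
    (hw : ∀ v ∈ w, v ≠ []) : PosReach σ₀ π₀ T₀ w c := by
  have pop : ∀ w : List (List Γ), (∀ v ∈ w, v ≠ []) → PosReach σ π T (w.map (· ++ γ)) γ →
      PosReach σ₀ π₀ T₀ w [] := fun w hw h => by
    by_cases h0 : [] ∈ T₀
    exacts [.mem h0, (hpop h0 w hw h).elim]
  generalize hw' : w.map (· ++ γ) = w' at h
  generalize hc' : c ++ γ = c' at h
  induction h generalizing w c with
  | mem hmem =>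
    subst hw' hc'
    rcases eq_or_ne c [] with rfl | hne
    · exact pop w hw (.mem hmem)
    · exact .mem (hT c hne hmem)
  | @step w' X β' α hα hrest ih =>
    subst hw'
    rcases c with _ | ⟨Y, β⟩
    · rw [List.nil_append] at hc'
      have hstep := PosReach.step α hα hrest
      rw [← hc'] at hstep
      exact pop w hw hstep
    simp only [List.cons_append, List.cons.injEq] at hc'
    obtain ⟨rfl, rfl⟩ := hc'
    exact .step α (by rwa [← hag w Y β hw]) (ih (List.forall_mem_append.2
      ⟨hw, List.forall_mem_singleton.2 (List.cons_ne_nil Y β)⟩) (by simp) (by simp))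

theorem PosReach.append_history_iff {σ₁ σ₂ : Δ.Strat Δ.isBox} {π₁ π₂ : Δ.Strat Δ.isDiamond}
    {h : List (List Γ)} {Q : List (List Γ) → List Γ → Prop}
    (hQ : ∀ u c c', Q u c → Q (u ++ [c]) c')
    (hch : ∀ u c, Q u c → Δ.choice σ₁ π₁ (h ++ u) c = Δ.choice σ₂ π₂ u c)
    {u : List (List Γ)} {c : List Γ} (hq : Q u c) :
    PosReach σ₁ π₁ T (h ++ u) c ↔ PosReach σ₂ π₂ T u c := by
  constructor
  · intro H
    generalize hu : h ++ u = w at H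
    induction H generalizing u with
    | mem hc => exact .mem hc
    | step α hα _ ih =>
      subst hu
      exact .step α (by rwa [← hch u _ hq]) (ih (hQ _ _ _ hq) (List.append_assoc ..).symm)
  · intro H
    induction H with
    | mem hc => exact .mem hc
    | step α hα _ ih =>
      refine .step α (by rwa [hch _ _ hq]) ?_
      simpa using ih (hQ _ _ _ hq)

theorem PosReach.iff_of_choice_append_eq {σ₁ σ₂ : Δ.Strat Δ.isBox} {π₁ π₂ : Δ.Strat Δ.isDiamond}
    {h : List (List Γ)}
    (hch : ∀ u X β, (u ++ [X :: β]).head? = some γ →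
      Δ.choice σ₁ π₁ (h ++ u) (X :: β) = Δ.choice σ₂ π₂ u (X :: β)) :
    PosReach σ₁ π₁ T h γ ↔ PosReach σ₂ π₂ T [] γ := by
  simpa using PosReach.append_history_iff (Q := fun u c => (u ++ [c]).head? = some γ)
    (fun _ _ _ hq => by rw [List.head?_append, hq]; rfl)
    (fun u c hu => by rcases c with _ | ⟨X, β⟩; exacts [rfl, hch u X β hu]) (u := []) rfl

lemma posReach_splice_box_iff {σs : List (List Γ) → Δ.Strat Δ.isBox} {h : List (List Γ)}
    (hh : ∀ v ∈ h, γ.length < v.length) :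
    PosReach (Strat.splice γ σ₀ σs) π T h γ ↔ PosReach (σs h) (π.shift h) T [] γ :=
  PosReach.iff_of_choice_append_eq fun _ _ _ hu =>
    choice_cons_congr (fun _ => Strat.splice_f_append hh hu) fun _ => rfl

lemma posReach_splice_diamond_iff {πs : List (List Γ) → Δ.Strat Δ.isDiamond}
    {h : List (List Γ)} (hh : ∀ v ∈ h, γ.length < v.length) :
    PosReach σ (Strat.splice γ π₀ πs) T h γ ↔ PosReach (σ.shift h) (πs h) T [] γ :=
  PosReach.iff_of_choice_append_eq fun _ _ _ hu =>
    choice_cons_congr (fun _ => rfl) fun _ => Strat.splice_f_append hh hu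

end Simulation

section WinningRegion

variable {S : Set Γ} {T T₀ : Set (List Γ)} {X : Γ} {γ : List Γ}

lemma nil_notMem_WBoxPos (hT : [] ∉ T) : [] ∉ Δ.WBoxPos T := fun h => by
  obtain ⟨σ, hσ⟩ := mem_WBoxPos_iff.1 h
  exact hT (hσ (Classical.arbitrary _)).nil_mem

theorem cons_mem_WBoxPos (hT₀ : ∀ c ≠ [], c ∈ T₀ ↔ c ∈ topLang S) (hX : [X] ∈ Δ.WBoxPos T₀)
    (hγ : [] ∈ T₀ → γ ∈ Δ.WBoxPos (topLang S)) : X :: γ ∈ Δ.WBoxPos (topLang S) := by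
  obtain ⟨σ₀, hσ₀⟩ := mem_WBoxPos_iff.1 hX
  obtain ⟨σγ, hσγ⟩ : ∃ σγ : Δ.Strat Δ.isBox, [] ∈ T₀ → ∀ π, PosReach σγ π (topLang S) [] γ := by
    by_cases h0 : [] ∈ T₀
    · obtain ⟨σγ, hσγ⟩ := mem_WBoxPos_iff.1 (hγ h0)
      exact ⟨σγ, fun _ => hσγ⟩
    · exact ⟨σ₀, fun h => (h0 h).elim⟩
  refine mem_WBoxPos_iff.2 ⟨Strat.splice γ σ₀ fun _ => σγ, fun π => ?_⟩
  simpa using (hσ₀ (π.above γ)).append_bottom (agreeAbove_splice_box _)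
    (fun c hc hne => (mem_topLang_append hne).2 ((hT₀ c hne).1 hc))
    (fun h0 w hw => (posReach_splice_box_iff (List.length_lt_of_mem_map_append hw)).2 (hσγ h0 _))
    (by simp)

theorem cons_notMem_WBoxPos (hT₀ : ∀ c ≠ [], c ∈ T₀ ↔ c ∈ topLang S) (hX : [X] ∉ Δ.WBoxPos T₀)
    (hγ : [] ∉ T₀ → γ ∉ Δ.WBoxPos (topLang S)) : X :: γ ∉ Δ.WBoxPos (topLang S) := by
  intro hmem
  obtain ⟨σ, hσ⟩ := mem_WBoxPos_iff.1 hmem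
  obtain ⟨π₀, hπ₀⟩ : ∃ π₀, ¬ PosReach (σ.above γ) π₀ T₀ [] [X] := by
    by_contra! h
    exact hX (mem_WBoxPos_iff.2 ⟨_, h⟩)
  have hπs : ∀ h, ∃ π : Δ.Strat Δ.isDiamond,
      [] ∉ T₀ → ¬ PosReach (σ.shift h) π (topLang S) [] γ := by
    intro h
    by_cases h0 : [] ∈ T₀
    · exact ⟨π₀, fun h => (h h0).elim⟩
    · by_contra! hc
      exact hγ h0 (mem_WBoxPos_iff.2 ⟨σ.shift h, fun π => (hc π).2⟩)
  choose πs hπs using hπs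
  refine hπ₀ (PosReach.of_append_bottom (agreeAbove_splice_diamond πs)
    (fun c hne hc => (hT₀ c hne).2 ((mem_topLang_append hne).1 hc))
    (fun h0 w hw hr =>
      hπs _ h0 ((posReach_splice_diamond_iff (List.length_lt_of_mem_map_append hw)).1 hr))
    (w := []) (c := [X]) (by simpa using hσ (Strat.splice γ π₀ πs)) (by simp))

theorem mem_WBoxPos_cons_iff :
    X :: γ ∈ Δ.WBoxPos (topLang S) ↔ [X] ∈ Δ.WBoxPos (topLang S) ∨
      ([X] ∈ Δ.WBoxPos (topLang S ∪ {([] : List Γ)}) ∧ γ ∈ Δ.WBoxPos (topLang S)) := by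
  have hT : ∀ c ≠ [], c ∈ topLang S ↔ c ∈ topLang S := fun _ _ => Iff.rfl
  have hTε : ∀ c ≠ [], c ∈ (topLang S ∪ {([] : List Γ)} : Set (List Γ)) ↔ c ∈ topLang S :=
    fun _ hc => ⟨fun h => h.resolve_right hc, Or.inl⟩
  constructor
  · intro h
    by_contra! hn
    by_cases hε : [X] ∈ Δ.WBoxPos (topLang S ∪ {([] : List Γ)})
    · exact cons_notMem_WBoxPos hT hn.1 (fun _ => hn.2 hε) h
    · exact cons_notMem_WBoxPos hTε hε (fun h0 => (h0 (Or.inr rfl)).elim) h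
  · rintro (hX | ⟨hX, hγ⟩)
    · exact cons_mem_WBoxPos hT hX fun h0 => (nil_notMem_topLang h0).elim
    · exact cons_mem_WBoxPos hTε hX fun _ => hγ

end WinningRegion

end BPA

/-- `W_Box(T,>0) = B* A Γ*` where `A = W_Box(T,>0) ∩ Γ` and
`B = W_Box(T∪{ε},>0) ∩ Γ`; in particular `W_Box(T,>0)` is regular. -/
theorem WBoxPos_eq_regular {Γ : Type*} [Fintype Γ] (Δ : BPA Γ) (ΓT : Set Γ)
    (A B : Set Γ)
    (hA : A = {X | [X] ∈ Δ.WBoxPos (topLang ΓT)})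
    (hB : B = {X | [X] ∈ Δ.WBoxPos (topLang ΓT ∪ {([] : List Γ)})}) :
    (Δ.WBoxPos (topLang ΓT) : Language Γ)
        = KStar.kstar (symLang B) * symLang A * (⊤ : Language Γ) ∧
      Language.IsRegular (Δ.WBoxPos (topLang ΓT) : Language Γ) := by
  have hcons : ∀ X γ, X :: γ ∈ (Δ.WBoxPos (topLang ΓT) : Language Γ) ↔
      X ∈ A ∨ X ∈ B ∧ γ ∈ (Δ.WBoxPos (topLang ΓT) : Language Γ) := by
    subst hA hB
    exact fun X γ => BPA.mem_WBoxPos_cons_iff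
  exact ⟨eq_kstar_symLang_mul_of_cons_mem_iff (BPA.nil_notMem_WBoxPos nil_notMem_topLang)
    hcons, isRegular_of_cons_mem_iff hcons⟩
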